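/- Let K be a field of characteristic zero and let α₀, …, α₄ ∈ K be linearly independent over ℚ. Fix j, j' ∈ {0,…,4} with j ≠ j', integers d, D with 1 ≤ d ≤ D, and set z₀ = (α_{j'} − α_j)/d. Then z₀ · ∏_{k=0}^{5D} (5α_j + k·z₀) / ( d · ∏_{(l,k) ∈ A_D} (α_j − α_l + k·z₀) ) = E(d,j,j') · F(j') · I_{j'}^{D−d}(z₀), where A_D = {(l,k) : 0 ≤ l ≤ 4, 0 ≤ k ≤ D, (l,k) ≠ (j,0), (l,k) ≠ (j',d)}, E(d,j,j') = (1/d) · ∏_{k=0}^{5d} (5α_j + k·z₀) / ∏_{(l,k) ∈ A_d} (α_j − α_l + k·z₀), F(j') = ∏_{l≠j'} (α_{j'} − α_l) / (5α_{j'}), and I_{j'}^{e}(z) = z · ∏_{k=0}^{5e} (5α_{j'} + kz) / ∏_{(l,k): 0≤l≤4, 0≤k≤e, (l,k)≠(j',0)} (α_{j'} − α_l + kz). (All denominators appearing are nonzero under the ℚ-linear-independence hypothesis, and the left-hand side is the residue at z = z₀ of the q^D-coefficient I_j^D(z) of the fixed-point-localized I-function.) -/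

import Mathlib

/-!
Because `d z₀ = α_{j'} - α_j`, every factor of `I_j^D(z₀)` beyond degree `d` is a factor of
`I_{j'}^{D-d}(z₀)` in disguise: `5α_j + (5d + m) z₀ = 5α_{j'} + m z₀` and
`α_j - α_l + (d + m) z₀ = α_{j'} - α_l + m z₀`. Splitting the products at degree `d` therefore
leaves only the `k = 0` factors of `I_{j'}`, namely `5α_{j'}` and `∏_{l ≠ j'} (α_{j'} - α_l)`,
which are cancelled by `F(j')`; they are nonzero since `α` is injective and `α_{j'} ≠ 0`.
-/

open Finset

section
variable {K : Type*} [Field K]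

lemma add_natCast_add_succ_mul {x y z : K} {m : ℕ} (h : (m : K) * z = y - x) (n : ℕ) :
    x + ((m + 1 + n : ℕ) : K) * z = y + ((n + 1 : ℕ) : K) * z := by
  push_cast
  linear_combination h

lemma prod_range_natCast_mul_add_split (n d e : ℕ) {x y z : K} (hz : (d : K) * z = y - x) :
    ∏ k ∈ range (n * (d + e) + 1), (n * x + (k : K) * z) =
      (∏ k ∈ range (n * d + 1), (n * x + (k : K) * z)) *
        ∏ i ∈ range (n * e), (n * y + ((i + 1 : ℕ) : K) * z) := by
  rw [show n * (d + e) + 1 = n * d + 1 + n * e by ring, prod_range_add]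
  congr 1
  refine prod_congr rfl fun i _ => add_natCast_add_succ_mul ?_ i
  push_cast
  linear_combination (n : K) * hz

lemma mul_div_mul_eq_one_div_mul_div_mul_div {z d N M B T P c : K} (hP : P ≠ 0) (hc : c ≠ 0) :
    z * (N * M) / (d * (B * T)) = 1 / d * N / B * (P / c) * (z * (M * c) / (P * T)) := by
  field_simp

end

section
variable {ι M : Type*} [CommMonoid M]

lemma prod_filter_product_range_add (s : Finset ι) (P : ι × ℕ → Prop) [DecidablePred P]
    (g : ι × ℕ → M) (d e : ℕ) (hP : ∀ l k, d < k → P (l, k)) :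
    ∏ p ∈ (s ×ˢ range (d + e + 1)).filter P, g p =
      (∏ p ∈ (s ×ˢ range (d + 1)).filter P, g p) *
        ∏ l ∈ s, ∏ i ∈ range e, g (l, d + 1 + i) := by
  simp only [prod_filter, prod_product, ← prod_mul_distrib]
  refine prod_congr rfl fun l _ => ?_
  rw [show d + e + 1 = d + 1 + e by ring, prod_range_add]
  congr 1
  exact prod_congr rfl fun i _ => if_pos (hP l _ (by omega))

lemma prod_filter_product_range_succ_ne [Fintype ι] [DecidableEq ι] (j : ι) (g : ι × ℕ → M)
    (e : ℕ) :
    ∏ p ∈ (univ ×ˢ range (e + 1)).filter (· ≠ (j, 0)), g p =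
      (∏ l ∈ univ.erase j, g (l, 0)) * ∏ l, ∏ i ∈ range e, g (l, i + 1) := by
  rw [← filter_ne', prod_filter, prod_filter, prod_product, ← prod_mul_distrib]
  refine prod_congr rfl fun l _ => ?_
  rw [prod_range_succ', mul_comm]
  congr 1
  · simp
  · exact prod_congr rfl fun i _ => if_pos (by simp)

end

theorem quintic_I_function_edge_removal_recursion_general {K : Type*} [Field K] [CharZero K]
    (α : Fin 5 → K) (hα : LinearIndependent ℚ α) (j j' : Fin 5)
    (d D : ℕ) (hd : 1 ≤ d) (hdD : d ≤ D) :
    (((α j' - α j) / d) *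
          ∏ k ∈ Finset.range (5 * D + 1), (5 * α j + (k : K) * ((α j' - α j) / d))) /
        ((d : K) *
          ∏ p ∈ (Finset.univ ×ˢ Finset.range (D + 1)).filter
              (fun p : Fin 5 × ℕ => p ≠ (j, 0) ∧ p ≠ (j', d)),
            (α j - α p.1 + (p.2 : K) * ((α j' - α j) / d)))
      = ((1 / (d : K)) *
            (∏ k ∈ Finset.range (5 * d + 1), (5 * α j + (k : K) * ((α j' - α j) / d))) /
            (∏ p ∈ (Finset.univ ×ˢ Finset.range (d + 1)).filter
                (fun p : Fin 5 × ℕ => p ≠ (j, 0) ∧ p ≠ (j', d)),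
              (α j - α p.1 + (p.2 : K) * ((α j' - α j) / d)))) *
        ((∏ l ∈ Finset.univ.erase j', (α j' - α l)) / (5 * α j')) *
        (((α j' - α j) / d) *
            (∏ k ∈ Finset.range (5 * (D - d) + 1),
              (5 * α j' + (k : K) * ((α j' - α j) / d))) /
            (∏ p ∈ (Finset.univ ×ˢ Finset.range ((D - d) + 1)).filter
                (fun p : Fin 5 × ℕ => p ≠ (j', 0)),
              (α j' - α p.1 + (p.2 : K) * ((α j' - α j) / d)))) := by
  obtain ⟨e, rfl⟩ := Nat.exists_eq_add_of_le hdD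
  rw [Nat.add_sub_cancel_left]
  set z := (α j' - α j) / d
  have hz : (d : K) * z = α j' - α j := mul_div_cancel₀ _ (by norm_cast; omega)
  have hshift (l : Fin 5) (i : ℕ) :
      α j - α l + ((d + 1 + i : ℕ) : K) * z = α j' - α l + ((i + 1 : ℕ) : K) * z :=
    add_natCast_add_succ_mul (by rw [hz]; ring) i
  have hP : ∏ l ∈ univ.erase j', (α j' - α l) ≠ 0 :=
    prod_ne_zero_iff.2 fun l hl => sub_ne_zero.2 (hα.injective.ne (ne_of_mem_erase hl).symm)
  have h5 : (5 : K) * α j' ≠ 0 := mul_ne_zero (by norm_num) (hα.ne_zero j')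
  have hnum := prod_range_natCast_mul_add_split 5 d e hz
  simp only [Nat.cast_ofNat] at hnum
  rw [hnum, prod_range_succ' _ (5 * e), prod_filter_product_range_add _ _ _ d e
    (fun _ _ hk => by simp only [ne_eq, Prod.mk.injEq]; omega),
    prod_filter_product_range_succ_ne]
  simp only [hshift, Nat.cast_zero, zero_mul, add_zero]
  exact mul_div_mul_eq_one_div_mul_div_mul_div hP h5

/-- The edge-removal residue recursion for the fixed-point-localized I-function of the
quintic threefold: with `z₀ = (α_{j'} - α_j)/d`, the residue at `z = z₀` of the
`q^D`-coefficient `I_j^D(z)` equals `E(d,j,j') · F(j') · I_{j'}^{D-d}(z₀)`. -/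
theorem quintic_I_function_edge_removal_recursion {K : Type*} [Field K] [CharZero K]
    (α : Fin 5 → K) (hα : LinearIndependent ℚ α) (j j' : Fin 5) (hjj : j ≠ j')
    (d D : ℕ) (hd : 1 ≤ d) (hdD : d ≤ D) :
    (((α j' - α j) / d) *
          ∏ k ∈ Finset.range (5 * D + 1), (5 * α j + (k : K) * ((α j' - α j) / d))) /
        ((d : K) *
          ∏ p ∈ (Finset.univ ×ˢ Finset.range (D + 1)).filter
              (fun p : Fin 5 × ℕ => p ≠ (j, 0) ∧ p ≠ (j', d)),
            (α j - α p.1 + (p.2 : K) * ((α j' - α j) / d)))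
      = ((1 / (d : K)) *
            (∏ k ∈ Finset.range (5 * d + 1), (5 * α j + (k : K) * ((α j' - α j) / d))) /
            (∏ p ∈ (Finset.univ ×ˢ Finset.range (d + 1)).filter
                (fun p : Fin 5 × ℕ => p ≠ (j, 0) ∧ p ≠ (j', d)),
              (α j - α p.1 + (p.2 : K) * ((α j' - α j) / d)))) *
        ((∏ l ∈ Finset.univ.erase j', (α j' - α l)) / (5 * α j')) *
        (((α j' - α j) / d) *
            (∏ k ∈ Finset.range (5 * (D - d) + 1),
              (5 * α j' + (k : K) * ((α j' - α j) / d))) /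
            (∏ p ∈ (Finset.univ ×ˢ Finset.range ((D - d) + 1)).filter
                (fun p : Fin 5 × ℕ => p ≠ (j', 0)),
              (α j' - α p.1 + (p.2 : K) * ((α j' - α j) / d)))) :=
  quintic_I_function_edge_removal_recursion_general α hα j j' d D hd hdD
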